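/- Let (H, α, R) be a quasitriangular monoidal Hom-bialgebra with Drinfeld twist σ and inverse ϱ. Define Rᵠ = (σ₂₁R)ϱ ∈ H⊗H, where σ₂₁ = σ⁽²⁾⊗σ⁽¹⁾. Then Rᵠ satisfies RᵠΔᵠ(x) = Δᵠᵒᵖ(x)Rᵠ for all x ∈ H, where Δᵠ(x) = (σΔ(x))ϱ. -/

import Mathlib

open TensorProduct

noncomputable section
namespace HomTwist

variable {k : Type*} [CommRing k]

section Defs
variable {H₁ H₂ A B : Type*} [AddCommGroup H₁] [Module k H₁] [AddCommGroup H₂] [Module k H₂]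
  [AddCommGroup A] [Module k A] [AddCommGroup B] [Module k B]

/-- The componentwise "action" of `H₁ ⊗ H₂` on `A ⊗ B` induced by bilinear actions
`f : H₁ → A → A` and `g : H₂ → B → B`:  `(h₁ ⊗ h₂) • (a ⊗ b) = (f h₁ a) ⊗ (g h₂ b)`. -/
def pairMap (f : H₁ →ₗ[k] A →ₗ[k] A) (g : H₂ →ₗ[k] B →ₗ[k] B) :
    (H₁ ⊗[k] H₂) →ₗ[k] (A ⊗[k] B) →ₗ[k] A ⊗[k] B :=
  TensorProduct.lift (((TensorProduct.mapBilinear (RingHom.id k) A B A B).comp f).compl₂ g)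

end Defs

section Structures
variable {H : Type*} [AddCommGroup H] [Module k H]

/-- Componentwise product on `H ⊗ H` induced by a bilinear multiplication on `H`. -/
def mulT (mul : H →ₗ[k] H →ₗ[k] H) : (H ⊗[k] H) →ₗ[k] (H ⊗[k] H) →ₗ[k] H ⊗[k] H :=
  pairMap mul mul

/-- Componentwise product on `H ⊗ (H ⊗ H)`. -/
def mulT3 (mul : H →ₗ[k] H →ₗ[k] H) :
    (H ⊗[k] (H ⊗[k] H)) →ₗ[k] (H ⊗[k] (H ⊗[k] H)) →ₗ[k] H ⊗[k] (H ⊗[k] H) :=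
  pairMap mul (mulT mul)

/-- `(r ⊗ R) ↦ r⁽¹⁾ ⊗ (R⁽¹⁾ ⊗ r⁽²⁾R⁽²⁾)`. -/
def hexA (mul : H →ₗ[k] H →ₗ[k] H) :
    ((H ⊗[k] H) ⊗[k] (H ⊗[k] H)) →ₗ[k] H ⊗[k] (H ⊗[k] H) :=
  (TensorProduct.assoc k H H H).toLinearMap
    ∘ₗ TensorProduct.map LinearMap.id (TensorProduct.lift mul)
    ∘ₗ (TensorProduct.tensorTensorTensorComm k H H H H).toLinearMap

/-- `(r ⊗ R) ↦ r⁽¹⁾R⁽¹⁾ ⊗ (R⁽²⁾ ⊗ r⁽²⁾)`. -/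
def hexB (mul : H →ₗ[k] H →ₗ[k] H) :
    ((H ⊗[k] H) ⊗[k] (H ⊗[k] H)) →ₗ[k] H ⊗[k] (H ⊗[k] H) :=
  TensorProduct.map (TensorProduct.lift mul) (TensorProduct.comm k H H).toLinearMap
    ∘ₗ (TensorProduct.tensorTensorTensorComm k H H H H).toLinearMap

/-- Axioms of a monoidal Hom-bialgebra (Caenepeel–Goyvaerts). -/
structure IsMonHomBialgebra (mul : H →ₗ[k] H →ₗ[k] H) (one : H) (alpha : H ≃ₗ[k] H)
    (comul : H →ₗ[k] H ⊗[k] H) (counit : H →ₗ[k] k) : Prop where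
  alpha_mul : ∀ a b, alpha (mul a b) = mul (alpha a) (alpha b)
  hom_assoc : ∀ a b c, mul (alpha a) (mul b c) = mul (mul a b) (alpha c)
  alpha_one : alpha one = one
  one_mul' : ∀ a, mul one a = alpha a
  mul_one' : ∀ a, mul a one = alpha a
  comul_alpha : ∀ c, comul (alpha c)
      = TensorProduct.map alpha.toLinearMap alpha.toLinearMap (comul c)
  hom_coassoc : ∀ c,
      TensorProduct.map alpha.symm.toLinearMap comul (comul c)
        = TensorProduct.assoc k H H H
            (TensorProduct.map comul alpha.symm.toLinearMap (comul c))
  counit_alpha : ∀ c, counit (alpha c) = counit c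
  counit_id : ∀ c, TensorProduct.lid k H
      (TensorProduct.map counit LinearMap.id (comul c)) = alpha.symm c
  id_counit : ∀ c, TensorProduct.rid k H
      (TensorProduct.map LinearMap.id counit (comul c)) = alpha.symm c
  comul_mul : ∀ a b, comul (mul a b) = mulT mul (comul a) (comul b)
  comul_one : comul one = one ⊗ₜ[k] one
  counit_mul : ∀ a b, counit (mul a b) = counit a * counit b
  counit_one : counit one = 1

/-- Axioms of a (Makhlouf–Silvestrov) Hom-bialgebra (with bijective structure map). -/
structure IsHomBialgebra (mul : H →ₗ[k] H →ₗ[k] H) (one : H) (alpha : H ≃ₗ[k] H)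
    (comul : H →ₗ[k] H ⊗[k] H) (counit : H →ₗ[k] k) : Prop where
  alpha_mul : ∀ a b, alpha (mul a b) = mul (alpha a) (alpha b)
  hom_assoc : ∀ a b c, mul (alpha a) (mul b c) = mul (mul a b) (alpha c)
  alpha_one : alpha one = one
  one_mul' : ∀ a, mul one a = alpha a
  mul_one' : ∀ a, mul a one = alpha a
  comul_alpha : ∀ c, comul (alpha c)
      = TensorProduct.map alpha.toLinearMap alpha.toLinearMap (comul c)
  hom_coassoc : ∀ c,
      TensorProduct.map alpha.toLinearMap comul (comul c)
        = TensorProduct.assoc k H H H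
            (TensorProduct.map comul alpha.toLinearMap (comul c))
  counit_alpha : ∀ c, counit (alpha c) = counit c
  counit_id : ∀ c, TensorProduct.lid k H
      (TensorProduct.map counit LinearMap.id (comul c)) = alpha c
  id_counit : ∀ c, TensorProduct.rid k H
      (TensorProduct.map LinearMap.id counit (comul c)) = alpha c
  comul_mul : ∀ a b, comul (mul a b) = mulT mul (comul a) (comul b)
  comul_one : comul one = one ⊗ₜ[k] one
  counit_mul : ∀ a b, counit (mul a b) = counit a * counit b
  counit_one : counit one = 1

/-- Axioms of an ordinary (possibly noncommutative) bialgebra, given by raw data. -/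
structure IsBialgebra (mul : H →ₗ[k] H →ₗ[k] H) (one : H)
    (comul : H →ₗ[k] H ⊗[k] H) (counit : H →ₗ[k] k) : Prop where
  assoc : ∀ a b c, mul (mul a b) c = mul a (mul b c)
  one_mul' : ∀ a, mul one a = a
  mul_one' : ∀ a, mul a one = a
  coassoc : ∀ c, TensorProduct.map LinearMap.id comul (comul c)
      = TensorProduct.assoc k H H H (TensorProduct.map comul LinearMap.id (comul c))
  counit_id : ∀ c, TensorProduct.lid k H
      (TensorProduct.map counit LinearMap.id (comul c)) = c
  id_counit : ∀ c, TensorProduct.rid k H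
      (TensorProduct.map LinearMap.id counit (comul c)) = c
  comul_mul : ∀ a b, comul (mul a b) = mulT mul (comul a) (comul b)
  comul_one : comul one = one ⊗ₜ[k] one
  counit_mul : ∀ a b, counit (mul a b) = counit a * counit b
  counit_one : counit one = 1

/-- A Drinfeld twist `σ` (with inverse `ϱ`) for a monoidal Hom-bialgebra. -/
structure IsTwist (mul : H →ₗ[k] H →ₗ[k] H) (one : H) (alpha : H ≃ₗ[k] H)
    (comul : H →ₗ[k] H ⊗[k] H) (counit : H →ₗ[k] k) (σ ϱ : H ⊗[k] H) : Prop where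
  mul_inv : mulT mul σ ϱ = one ⊗ₜ[k] one
  inv_mul : mulT mul ϱ σ = one ⊗ₜ[k] one
  T1 : TensorProduct.map alpha.toLinearMap alpha.toLinearMap σ = σ
  T2l : TensorProduct.lid k H (TensorProduct.map counit LinearMap.id σ) = one
  T2r : TensorProduct.rid k H (TensorProduct.map LinearMap.id counit σ) = one
  T3 : TensorProduct.map LinearMap.id (mulT mul σ)
        (TensorProduct.map LinearMap.id comul σ)
      = TensorProduct.assoc k H H H
          (TensorProduct.map (mulT mul σ) LinearMap.id
            (TensorProduct.map comul LinearMap.id σ))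

/-- The `R`-matrix axioms (Q1)–(Q4) for a monoidal Hom-bialgebra. -/
structure IsRMatrix (mul : H →ₗ[k] H →ₗ[k] H) (alpha : H ≃ₗ[k] H)
    (comul : H →ₗ[k] H ⊗[k] H) (R : H ⊗[k] H) : Prop where
  Q1 : TensorProduct.map alpha.toLinearMap alpha.toLinearMap R = R
  Q2 : ∀ h, mulT mul R (comul h)
      = mulT mul (TensorProduct.comm k H H (comul h)) R
  Q3 : TensorProduct.assoc k H H H (TensorProduct.map comul LinearMap.id R)
      = hexA mul (R ⊗ₜ[k] R)
  Q4 : TensorProduct.map LinearMap.id comul R = hexB mul (R ⊗ₜ[k] R)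

/-- Axioms of a monoidal Hom-algebra. -/
structure IsMonHomAlgebra {A : Type*} [AddCommGroup A] [Module k A]
    (mul : A →ₗ[k] A →ₗ[k] A) (one : A) (alpha : A ≃ₗ[k] A) : Prop where
  alpha_mul : ∀ a b, alpha (mul a b) = mul (alpha a) (alpha b)
  hom_assoc : ∀ a b c, mul (alpha a) (mul b c) = mul (mul a b) (alpha c)
  alpha_one : alpha one = one
  one_mul' : ∀ a, mul one a = alpha a
  mul_one' : ∀ a, mul a one = alpha a

/-- Axioms of a monoidal Hom-coalgebra. -/
structure IsMonHomCoalgebra {C : Type*} [AddCommGroup C] [Module k C]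
    (comul : C →ₗ[k] C ⊗[k] C) (counit : C →ₗ[k] k) (alpha : C ≃ₗ[k] C) : Prop where
  comul_alpha : ∀ c, comul (alpha c)
      = TensorProduct.map alpha.toLinearMap alpha.toLinearMap (comul c)
  hom_coassoc : ∀ c,
      TensorProduct.map alpha.symm.toLinearMap comul (comul c)
        = TensorProduct.assoc k C C C
            (TensorProduct.map comul alpha.symm.toLinearMap (comul c))
  counit_alpha : ∀ c, counit (alpha c) = counit c
  counit_id : ∀ c, TensorProduct.lid k C
      (TensorProduct.map counit LinearMap.id (comul c)) = alpha.symm c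
  id_counit : ∀ c, TensorProduct.rid k C
      (TensorProduct.map LinearMap.id counit (comul c)) = alpha.symm c

/-- Axioms of a left `H`-Hom-module. -/
structure IsHomModule {M : Type*} [AddCommGroup M] [Module k M]
    (mul : H →ₗ[k] H →ₗ[k] H) (one : H) (alpha : H ≃ₗ[k] H)
    (alM : M ≃ₗ[k] M) (act : H →ₗ[k] M →ₗ[k] M) : Prop where
  compat : ∀ h m, alM (act h m) = act (alpha h) (alM m)
  hom_smul : ∀ h h' m, act (alpha h) (act h' m) = act (mul h h') (alM m)
  one_smul' : ∀ m, act one m = alM m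

/-- The twisted coproduct `Δᵠ(x) = (σ Δ(x)) ϱ`. -/
def twistComul (mul : H →ₗ[k] H →ₗ[k] H) (comul : H →ₗ[k] H ⊗[k] H)
    (σ ϱ : H ⊗[k] H) : H →ₗ[k] H ⊗[k] H :=
  ((mulT mul).flip ϱ) ∘ₗ (mulT mul σ) ∘ₗ comul

end Structures
end HomTwist
end

/-!
Everything happens in the monoidal Hom-algebra `H ⊗ H`, in which `σ`, `ϱ`, `R` and the flips
`σ₂₁`, `ϱ₂₁` are fixed by `α ⊗ α`. Around fixed elements Hom-associativity is plain
associativity, and cancelling `ϱσ = 1` in the middle of a product costs a single application of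
the structure map. Hence `Rᵠ Δᵠ(x)` and `Δᵠᵒᵖ(x) Rᵠ` reduce, up to that map, to
`σ₂₁ (R Δ(x)) ϱ` and `σ₂₁ (Δᵒᵖ(x) R) ϱ`, which agree by `R Δ(x) = Δᵒᵖ(x) R`.
-/

namespace HomTwist
open TensorProduct

namespace IsMonHomAlgebra

variable {k A : Type*} [CommRing k] [AddCommGroup A] [Module k A]
  {M : A →ₗ[k] A →ₗ[k] A} {e : A} {β : A ≃ₗ[k] A}

theorem mul_assoc_of_fixed (hA : IsMonHomAlgebra M e β) {a c : A} (ha : β a = a)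
    (hc : β c = c) (b : A) : M (M a b) c = M a (M b c) := by
  simpa only [ha, hc] using (hA.hom_assoc a b c).symm

theorem mul_mul_mul_cancel (hA : IsMonHomAlgebra M e β) {ρ s : A} (hρ : β ρ = ρ)
    (hs : β s = s) (hρs : M ρ s = e) (u w : A) : M (M u ρ) (M s w) = β (M u w) := by
  obtain ⟨w, rfl⟩ := β.surjective w
  have hinner : M ρ (M s w) = β (β w) := by
    simpa only [hρ, hρs, hA.one_mul'] using hA.hom_assoc ρ s w
  rw [← hs, ← hA.alpha_mul, ← hA.hom_assoc, hinner, hA.alpha_mul]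

theorem alpha_eq_self_of_inverse (hA : IsMonHomAlgebra M e β) {s ρ : A} (hs : β s = s)
    (hsρ : M s ρ = e) (hρs : M ρ s = e) : β ρ = ρ := by
  have hsβρ : M s (β ρ) = e := by rw [← hs, ← hA.alpha_mul, hsρ, hA.alpha_one]
  have h := hA.hom_assoc ρ s (β ρ)
  rw [hsβρ, hρs, hA.mul_one', hA.one_mul'] at h
  exact (β.injective (β.injective h)).symm

theorem conj_intertwines (hA : IsMonHomAlgebra M e β) {s s' ρ ρ' r : A} (hs : β s = s)
    (hs' : β s' = s') (hρ : β ρ = ρ) (hρ' : β ρ' = ρ') (hr : β r = r) (hρs : M ρ s = e)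
    (hρ's' : M ρ' s' = e) {c c' : A} (hrc : M r c = M c' r) :
    M (M (M s' r) ρ) (M (M s c) ρ) = M (M (M s' c') ρ') (M (M s' r) ρ) := by
  obtain ⟨c, rfl⟩ := β.surjective c
  obtain ⟨c', rfl⟩ := β.surjective c'
  have hrc₀ : M r c = M c' r := β.injective (by rw [hA.alpha_mul, hA.alpha_mul, hr, hrc])
  have hβrρ : β (M r ρ) = M r ρ := by rw [hA.alpha_mul, hr, hρ]
  calc M (M (M s' r) ρ) (M (M s (β c)) ρ)
      = M (M (M s' r) ρ) (M s (M (β c) ρ)) := by rw [hA.mul_assoc_of_fixed hs hρ]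
    _ = β (M (M s' r) (β (M c ρ))) := by
        rw [hA.mul_mul_mul_cancel hρ hs hρs, hA.alpha_mul c ρ, hρ]
    _ = β (M s' (M (M r c) ρ)) := by
        rw [← hA.hom_assoc, hs', hA.mul_assoc_of_fixed hr hρ]
    _ = β (M s' (M (β c') (M r ρ))) := by rw [hrc₀, hA.hom_assoc, hρ]
    _ = β (M (M s' (β c')) (M r ρ)) := by rw [← hβrρ, ← hA.hom_assoc, hs', hβrρ]
    _ = M (M (M s' (β c')) ρ') (M (M s' r) ρ) := by
        rw [hA.mul_assoc_of_fixed hs' hρ, hA.mul_mul_mul_cancel hρ' hs' hρ's']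

end IsMonHomAlgebra

section TensorProduct

variable {k A B : Type*} [CommRing k] [AddCommGroup A] [Module k A] [AddCommGroup B]
  [Module k B]

@[simp]
theorem pairMap_tmul (f : A →ₗ[k] A →ₗ[k] A) (g : B →ₗ[k] B →ₗ[k] B) (a a' : A) (b b' : B) :
    pairMap f g (a ⊗ₜ b) (a' ⊗ₜ b') = f a a' ⊗ₜ g b b' := rfl

theorem comm_pairMap (f : A →ₗ[k] A →ₗ[k] A) (g : B →ₗ[k] B →ₗ[k] B) (x y : A ⊗[k] B) :
    TensorProduct.comm k A B (pairMap f g x y)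
      = pairMap g f (TensorProduct.comm k A B x) (TensorProduct.comm k A B y) := by
  induction x using TensorProduct.induction_on <;>
    induction y using TensorProduct.induction_on <;> simp_all

theorem IsMonHomAlgebra.tensor {mA : A →ₗ[k] A →ₗ[k] A} {eA : A} {αA : A ≃ₗ[k] A}
    {mB : B →ₗ[k] B →ₗ[k] B} {eB : B} {αB : B ≃ₗ[k] B}
    (hA : IsMonHomAlgebra mA eA αA) (hB : IsMonHomAlgebra mB eB αB) :
    IsMonHomAlgebra (pairMap mA mB) (eA ⊗ₜ eB) (TensorProduct.congr αA αB) where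
  alpha_mul x y := by
    induction x using TensorProduct.induction_on <;>
      induction y using TensorProduct.induction_on <;> simp_all [hA.alpha_mul, hB.alpha_mul]
  hom_assoc x y z := by
    induction x using TensorProduct.induction_on <;>
      induction y using TensorProduct.induction_on <;>
        induction z using TensorProduct.induction_on <;> simp_all [hA.hom_assoc, hB.hom_assoc]
  alpha_one := by simp [hA.alpha_one, hB.alpha_one]
  one_mul' x := by
    induction x using TensorProduct.induction_on <;> simp_all [hA.one_mul', hB.one_mul']
  mul_one' x := by
    induction x using TensorProduct.induction_on <;> simp_all [hA.mul_one', hB.mul_one']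

end TensorProduct

theorem IsMonHomBialgebra.toIsMonHomAlgebra {k H : Type*} [CommRing k] [AddCommGroup H]
    [Module k H] {mul : H →ₗ[k] H →ₗ[k] H} {one : H} {alpha : H ≃ₗ[k] H}
    {comul : H →ₗ[k] H ⊗[k] H} {counit : H →ₗ[k] k}
    (hH : IsMonHomBialgebra mul one alpha comul counit) : IsMonHomAlgebra mul one alpha :=
  ⟨hH.alpha_mul, hH.hom_assoc, hH.alpha_one, hH.one_mul', hH.mul_one'⟩

theorem twisted_R_matrix_intertwines_general
    {k H : Type*} [CommRing k] [AddCommGroup H] [Module k H]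
    (mul : H →ₗ[k] H →ₗ[k] H) (one : H) (alpha : H ≃ₗ[k] H)
    (comul : H →ₗ[k] H ⊗[k] H) (counit : H →ₗ[k] k) (R σ ϱ : H ⊗[k] H)
    (hH : IsMonHomBialgebra mul one alpha comul counit)
    (hR : IsRMatrix mul alpha comul R)
    (hσ : IsTwist mul one alpha comul counit σ ϱ) :
    ∀ x, mulT mul (mulT mul (mulT mul (TensorProduct.comm k H H σ) R) ϱ)
          (twistComul mul comul σ ϱ x)
      = mulT mul (TensorProduct.comm k H H (twistComul mul comul σ ϱ x))
          (mulT mul (mulT mul (TensorProduct.comm k H H σ) R) ϱ) := by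
  intro x
  have hT : IsMonHomAlgebra (mulT mul) (one ⊗ₜ[k] one) (TensorProduct.congr alpha alpha) :=
    hH.toIsMonHomAlgebra.tensor hH.toIsMonHomAlgebra
  have hflip : ∀ t, TensorProduct.congr alpha alpha t = t →
      TensorProduct.congr alpha alpha (TensorProduct.comm k H H t) = TensorProduct.comm k H H t :=
    fun t ht => (map_comm _ _ t).trans (congrArg _ ht)
  have hϱ : TensorProduct.congr alpha alpha ϱ = ϱ :=
    hT.alpha_eq_self_of_inverse hσ.T1 hσ.mul_inv hσ.inv_mul
  have hϱσ_flip : mulT mul (TensorProduct.comm k H H ϱ) (TensorProduct.comm k H H σ)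
      = one ⊗ₜ[k] one := by
    rw [mulT, ← comm_pairMap, ← mulT, hσ.inv_mul, comm_tmul]
  have htwist : twistComul mul comul σ ϱ x = mulT mul (mulT mul σ (comul x)) ϱ := rfl
  rw [htwist, mulT, comm_pairMap, comm_pairMap, ← mulT]
  exact hT.conj_intertwines hσ.T1 (hflip σ hσ.T1) hϱ (hflip ϱ hϱ) hR.Q1 hσ.inv_mul hϱσ_flip
    (hR.Q2 x)

/-- (Proposition 4.9, Eq.(q2)) For a quasitriangular monoidal
Hom-bialgebra `(H, α, R)` with Drinfeld twist `σ`, the element `Rᵠ = (σ₂₁R)ϱ`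
satisfies `Rᵠ Δᵠ(x) = Δᵠᵒᵖ(x) Rᵠ`. -/
theorem twisted_R_matrix_intertwines
    {k H : Type*} [CommRing k] [AddCommGroup H] [Module k H]
    (mul : H →ₗ[k] H →ₗ[k] H) (one : H) (alpha : H ≃ₗ[k] H)
    (comul : H →ₗ[k] H ⊗[k] H) (counit : H →ₗ[k] k) (R Rinv σ ϱ : H ⊗[k] H)
    (hH : IsMonHomBialgebra mul one alpha comul counit)
    (hinv₁ : mulT mul R Rinv = one ⊗ₜ[k] one)
    (hinv₂ : mulT mul Rinv R = one ⊗ₜ[k] one)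
    (hR : IsRMatrix mul alpha comul R)
    (hσ : IsTwist mul one alpha comul counit σ ϱ) :
    ∀ x, mulT mul (mulT mul (mulT mul (TensorProduct.comm k H H σ) R) ϱ)
          (twistComul mul comul σ ϱ x)
      = mulT mul (TensorProduct.comm k H H (twistComul mul comul σ ϱ x))
          (mulT mul (mulT mul (TensorProduct.comm k H H σ) R) ϱ) :=
  twisted_R_matrix_intertwines_general mul one alpha comul counit R σ ϱ hH hR hσ

end HomTwist
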